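/- arXiv:2505.01897 — 15 statements merged into one kernel-verified Lean document; each statement's English description precedes it below -/
import Mathlib

section
/- Let V be a real vector space with 3 ≤ dim V = n < ∞, let g be a nondegenerate symmetric bilinear form on V, let P ∈ V, let π : V → ℝ be the linear form π(X) = g(X,P), and let ω ∈ ℝ. If (1/2)(3ω + π(P))(g(X,Z)Y − g(Y,Z)X) − (1/4)π(Z)(π(Y)X − π(X)Y) = 0 for all X,Y,Z ∈ V, then 2ω = −g(P,P). -/
/-- Pointwise algebraic form of the statement: if the difference tensor `R0 − Rg`
of the associated symmetric connection of a concircularly semi-symmetric metric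
connection vanishes, then `2ω = −g(P,P)`. -/
theorem stmt_2 {V : Type*} [AddCommGroup V] [Module ℝ V] [FiniteDimensional ℝ V]
    (n : ℕ) (hn : Module.finrank ℝ V = n) (hn3 : 3 ≤ n)
    (g : V →ₗ[ℝ] V →ₗ[ℝ] ℝ)
    (hgsymm : ∀ X Y : V, g X Y = g Y X)
    (hgnd : ∀ X : V, (∀ Y : V, g X Y = 0) → X = 0)
    (P : V) (π : V → ℝ) (hπ : ∀ X : V, π X = g X P) (ω : ℝ)
    (hyp : ∀ X Y Z : V,
      ((1:ℝ)/2 * (3 * ω + π P)) • (g X Z • Y - g Y Z • X)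
        - ((1:ℝ)/4 * π Z) • (π Y • X - π X • Y) = 0) :
    2 * ω = - g P P := by
  set a : ℝ := (1:ℝ)/2 * (3 * ω + π P) with ha
  -- key pointwise identity
  have key : ∀ X Z : V, a * g X Z + ((1:ℝ)/4 * π Z) * π X = 0 := by
    intro X Z
    by_cases hX : X = 0
    · simp [hX, hπ]
    · -- choose Y outside span of X
      have hspan : (Submodule.span ℝ {X} : Submodule ℝ V) ≠ ⊤ := by
        intro htop
        have h1 : Module.finrank ℝ (Submodule.span ℝ {X}) = 1 :=
          finrank_span_singleton hX
        rw [htop, finrank_top, hn] at h1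
        omega
      obtain ⟨Y, hY⟩ : ∃ Y : V, Y ∉ Submodule.span ℝ {X} := by
        by_contra hall
        push_neg at hall
        exact hspan (Submodule.eq_top_iff'.mpr hall)
      have h := hyp X Y Z
      have h2 : (a * g X Z + ((1:ℝ)/4 * π Z) * π X) • Y
          = (a * g Y Z + ((1:ℝ)/4 * π Z) * π Y) • X := by
        linear_combination (norm := module) h
      by_contra hc
      apply hY
      have hYeq : Y = (a * g X Z + ((1:ℝ)/4 * π Z) * π X)⁻¹ •
          ((a * g Y Z + ((1:ℝ)/4 * π Z) * π Y) • X) := by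
        rw [← h2, smul_smul, inv_mul_cancel₀ hc, one_smul]
      rw [hYeq, smul_smul]
      exact Submodule.mem_span_singleton.mpr ⟨_, rfl⟩
  -- show a = 0 using a nonzero kernel vector of π
  have ha0 : a = 0 := by
    by_contra hane
    have hker : ∃ X0 : V, X0 ≠ 0 ∧ g X0 P = 0 := by
      by_contra hno
      push_neg at hno
      have hinj : Function.Injective (LinearMap.flip g P) := by
        rw [injective_iff_map_eq_zero]
        intro x hx
        by_contra hx0
        exact hno x hx0 hx
      have := LinearMap.finrank_le_finrank_of_injective hinj
      simp [Module.finrank_self, hn] at this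
      omega
    obtain ⟨X0, hX0ne, hX0⟩ := hker
    apply hX0ne
    apply hgnd
    intro Z
    have hk := key X0 Z
    rw [hπ X0, hX0, mul_zero, add_zero] at hk
    have := mul_eq_zero.mp hk
    rcases this with h | h
    · exact absurd h hane
    · exact h
  -- conclude
  have hPP : π P = 0 := by
    have hk := key P P
    rw [ha0, zero_mul, zero_add] at hk
    have : π P * π P = 0 := by linarith [hk]
    rcases mul_self_eq_zero.mp this with h
    exact h
  have hω : ω = 0 := by
    rw [hPP] at ha
    have : (1:ℝ)/2 * (3 * ω + 0) = 0 := ha0 ▸ ha.symm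
    linarith
  have : g P P = 0 := by rw [← hπ P]; exact hPP
  rw [hω, this]; ring
end

section
/- Let V be a real vector space with 3 ≤ dim V = n < ∞, g a symmetric bilinear form on V, P ∈ V with g(P,P) = −1, and π(X) = g(X,P). Let Rg be a curvature-type tensor satisfying Rg(X,Y)P = π(Y)X − π(X)Y for all X,Y ∈ V. Define R0(X,Y)Z = Rg(X,Y)Z + g(X,Z)Y − g(Y,Z)X − (1/4)π(Z)(π(Y)X − π(X)Y), R4(X,Y)Z = Rg(X,Y)Z + g(X,Z)Y − g(Y,Z)X − π(Z)(π(Y)X − π(X)Y), and R5(X,Y)Z = Rg(X,Y)Z + g(X,Z)Y − g(Y,Z)X − (1/2)π(Y)(π(Z)X − π(X)Z). Then each of R0, R4 and R5 is a non-zero tensor, i.e., for each of them there exist X,Y,Z ∈ V with value ≠ 0. -/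
/-- Pointwise algebraic form: in a GRW space-time with a semi-symmetric metric
`P`-connection the curvature tensors `R0`, `R4` and `R5` are non-zero. -/
theorem stmt_3 {V : Type*} [AddCommGroup V] [Module ℝ V] [FiniteDimensional ℝ V]
    (n : ℕ) (hn : Module.finrank ℝ V = n) (hn3 : 3 ≤ n)
    (g : V →ₗ[ℝ] V →ₗ[ℝ] ℝ)
    (hgsymm : ∀ X Y : V, g X Y = g Y X)
    (P : V) (hPP : g P P = -1)
    (π : V → ℝ) (hπ : ∀ X : V, π X = g X P)
    (Rg : V →ₗ[ℝ] V →ₗ[ℝ] V →ₗ[ℝ] V)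
    (hRgP : ∀ X Y : V, Rg X Y P = π Y • X - π X • Y)
    (R0 R4 R5 : V → V → V → V)
    (hR0 : ∀ X Y Z : V, R0 X Y Z =
      Rg X Y Z + g X Z • Y - g Y Z • X - ((1:ℝ)/4 * π Z) • (π Y • X - π X • Y))
    (hR4 : ∀ X Y Z : V, R4 X Y Z =
      Rg X Y Z + g X Z • Y - g Y Z • X - π Z • (π Y • X - π X • Y))
    (hR5 : ∀ X Y Z : V, R5 X Y Z =
      Rg X Y Z + g X Z • Y - g Y Z • X - ((1:ℝ)/2 * π Y) • (π Z • X - π X • Z)) :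
    (∃ X Y Z : V, R0 X Y Z ≠ 0) ∧ (∃ X Y Z : V, R4 X Y Z ≠ 0) ∧
      (∃ X Y Z : V, R5 X Y Z ≠ 0) := by

  have hPne : P ≠ 0 := by
    intro h; rw [h] at hPP; simp at hPP
  have hπP : π P = -1 := by rw [hπ, hPP]
  have hspan : (Submodule.span ℝ {P} : Submodule ℝ V) ≠ ⊤ := by
    intro h
    have h1 : Module.finrank ℝ (Submodule.span ℝ {P} : Submodule ℝ V) = 1 :=
      finrank_span_singleton hPne
    rw [h, finrank_top, hn] at h1
    omega
  obtain ⟨Y, hY⟩ : ∃ Y : V, Y ∉ (Submodule.span ℝ {P} : Submodule ℝ V) := by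
    by_contra h
    push_neg at h
    exact hspan (Submodule.eq_top_iff'.mpr h)
  have hkey : π Y • P + Y ≠ 0 := by
    intro h
    apply hY
    have : Y = (-π Y) • P := by
      rw [neg_smul]
      exact eq_neg_of_add_eq_zero_right h
    rw [this]
    exact Submodule.smul_mem _ _ (Submodule.mem_span_singleton_self P)
  refine ⟨⟨P, Y, P, ?_⟩, ⟨P, Y, P, ?_⟩, ⟨Y, P, P, ?_⟩⟩
  · have : R0 P Y P = (1/4 : ℝ) • (π Y • P + Y) := by
      rw [hR0, hRgP, ← hπ Y, hPP, hπP]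
      module
    rw [this]
    intro h
    exact hkey (by simpa using smul_eq_zero.mp h |>.resolve_left (by norm_num))
  · have : R4 P Y P = π Y • P + Y := by
      rw [hR4, hRgP, ← hπ Y, hPP, hπP]
      module
    rw [this]; exact hkey
  · have : R5 Y P P = (-(1/2) : ℝ) • (π Y • P + Y) := by
      rw [hR5, hRgP, ← hπ Y, hPP, hπP]
      module
    rw [this]
    intro h
    exact hkey (by simpa using smul_eq_zero.mp h |>.resolve_left (by norm_num))
end

section
/- Let V be a real vector space with 3 ≤ dim V = n < ∞, g a symmetric bilinear form on V, P ∈ V with g(P,P) = −1, and π(X) = g(X,P). Let Rg be a curvature-type tensor satisfying g(Rg(X,Y)U,V) = −g(Rg(X,Y)V,U) and Rg(P,Y)Z = g(Y,Z)P − π(Z)Y for all X,Y,Z,U,V ∈ V, and let Ricg be a symmetric bilinear form with Ricg(P,X) = (n−1)π(X) for all X ∈ V. Then Ricg(Rg(X,Y)U,V) + Ricg(U,Rg(X,Y)V) = 0 for all X,Y,U,V ∈ V (Ricci semi-symmetry) if and only if Ricg = (n−1)g (the manifold is Einstein). -/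
/-- Pointwise algebraic form: a GRW space-time with a semi-symmetric metric
`P`-connection is Ricci semi-symmetric if and only if it is an Einstein manifold,
in which case `Ricg = (n−1)g`. -/
theorem stmt_5 {V : Type*} [AddCommGroup V] [Module ℝ V] [FiniteDimensional ℝ V]
    (n : ℕ) (hn : Module.finrank ℝ V = n) (hn3 : 3 ≤ n)
    (g : V →ₗ[ℝ] V →ₗ[ℝ] ℝ)
    (hgsymm : ∀ X Y : V, g X Y = g Y X)
    (P : V) (hPP : g P P = -1)
    (π : V → ℝ) (hπ : ∀ X : V, π X = g X P)
    (Rg : V →ₗ[ℝ] V →ₗ[ℝ] V →ₗ[ℝ] V)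
    (hskew : ∀ X Y U W : V, g (Rg X Y U) W = - g (Rg X Y W) U)
    (hRgP : ∀ Y Z : V, Rg P Y Z = g Y Z • P - π Z • Y)
    (Ricg : V →ₗ[ℝ] V →ₗ[ℝ] ℝ)
    (hRicsymm : ∀ X Y : V, Ricg X Y = Ricg Y X)
    (hRicP : ∀ X : V, Ricg P X = ((n : ℝ) - 1) * π X) :
    (∀ X Y U W : V, Ricg (Rg X Y U) W + Ricg U (Rg X Y W) = 0) ↔
      (∀ X Y : V, Ricg X Y = ((n : ℝ) - 1) * g X Y) := by
  constructor
  · intro h X Y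
    have hs := h P X P Y
    rw [hRgP X P, hRgP X Y] at hs
    simp only [map_sub, map_smul, LinearMap.sub_apply, LinearMap.smul_apply,
      smul_eq_mul] at hs
    simp only [hRicP, hπ, hPP, hgsymm X P] at hs
    nlinarith [hs]
  · intro h X Y U W
    rw [h (Rg X Y U) W, h U (Rg X Y W), hgsymm U (Rg X Y W), hskew X Y W U]
    ring
end

section
/- Let V be a real vector space with 3 ≤ dim V = n < ∞, g a symmetric bilinear form on V, P ∈ V with g(P,P) = −1, π(X) = g(X,P), and Π(X,Y) = π(X)π(Y). Let Rg be a curvature-type tensor satisfying g(Rg(X,Y)U,V) = −g(Rg(X,Y)V,U) and π(Rg(X,Y)Z) = π(X)g(Y,Z) − π(Y)g(X,Z) for all X,Y,Z,U,V ∈ V, and let Ricg be a symmetric bilinear form on V. With R0, R1, R4 and Ric0, Ric1, Ric4 defined as in the context, the following identities hold: R0·Ric0 = Rg·Ricg − Q(g,Ricg) − ((n−1)/4)Q(g,Π) + (1/4)Q(Ricg,Π); R1·Ric1 = Rg·Ricg − Q(g,Ricg); R4·Ric4 = Rg·Ricg − Q(g,Ricg) − (n−1)Q(g,Π) + Q(Ricg,Π).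 -/
/-- `(S·B)(U,V;X,Y) = −B(S(X,Y)U,V) − B(U,S(X,Y)V)` for a curvature-type tensor `S`
and a bilinear-form-like map `B`. -/
def curvDot {V : Type*} (B : V → V → ℝ) (S : V → V → V → V) (U W X Y : V) : ℝ :=
  - B (S X Y U) W - B U (S X Y W)

/-- The Tachibana tensor
`Q(A,B)(U,V;X,Y) = −B(A(Y,U)X − A(X,U)Y, V) − B(U, A(Y,V)X − A(X,V)Y)`. -/
def tachibana {V : Type*} [AddCommGroup V] [Module ℝ V]
    (A B : V → V → ℝ) (U W X Y : V) : ℝ :=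
  - B (A Y U • X - A X U • Y) W - B U (A Y W • X - A X W • Y)

/-- Pointwise algebraic form of the identities for `Rθ·Ricθ`, `θ = 0,1,4`, in a GRW
space-time with a semi-symmetric metric `P`-connection. -/
theorem stmt_6 {V : Type*} [AddCommGroup V] [Module ℝ V] [FiniteDimensional ℝ V]
    (n : ℕ) (hn : Module.finrank ℝ V = n) (hn3 : 3 ≤ n)
    (g : V →ₗ[ℝ] V →ₗ[ℝ] ℝ)
    (hgsymm : ∀ X Y : V, g X Y = g Y X)
    (P : V) (hPP : g P P = -1)
    (π : V → ℝ) (hπ : ∀ X : V, π X = g X P)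
    (Rg : V →ₗ[ℝ] V →ₗ[ℝ] V →ₗ[ℝ] V)
    (hskew : ∀ X Y U W : V, g (Rg X Y U) W = - g (Rg X Y W) U)
    (hπRg : ∀ X Y Z : V, π (Rg X Y Z) = π X * g Y Z - π Y * g X Z)
    (Ricg : V →ₗ[ℝ] V →ₗ[ℝ] ℝ)
    (hRicsymm : ∀ X Y : V, Ricg X Y = Ricg Y X)
    (R0 R1 R4 : V → V → V → V)
    (hR0 : ∀ X Y Z : V, R0 X Y Z =
      Rg X Y Z + g X Z • Y - g Y Z • X - ((1:ℝ)/4 * π Z) • (π Y • X - π X • Y))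
    (hR1 : ∀ X Y Z : V, R1 X Y Z = Rg X Y Z + g X Z • Y - g Y Z • X)
    (hR4 : ∀ X Y Z : V, R4 X Y Z =
      Rg X Y Z + g X Z • Y - g Y Z • X - π Z • (π Y • X - π X • Y))
    (Ric0 Ric1 Ric4 : V → V → ℝ)
    (hRic0 : ∀ X Y : V, Ric0 X Y =
      Ricg X Y - ((n : ℝ) - 1)/4 * (4 * g X Y + π X * π Y))
    (hRic1 : ∀ X Y : V, Ric1 X Y = Ricg X Y - ((n : ℝ) - 1) * g X Y)
    (hRic4 : ∀ X Y : V, Ric4 X Y =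
      Ricg X Y - ((n : ℝ) - 1) * (g X Y + π X * π Y)) :
    (∀ U W X Y : V,
      curvDot Ric0 R0 U W X Y =
        curvDot (fun a b => Ricg a b) (fun a b c => Rg a b c) U W X Y
          - tachibana (fun a b => g a b) (fun a b => Ricg a b) U W X Y
          - ((n : ℝ) - 1)/4 *
              tachibana (fun a b => g a b) (fun a b => π a * π b) U W X Y
          + (1:ℝ)/4 *
              tachibana (fun a b => Ricg a b) (fun a b => π a * π b) U W X Y) ∧
    (∀ U W X Y : V,
      curvDot Ric1 R1 U W X Y =
        curvDot (fun a b => Ricg a b) (fun a b c => Rg a b c) U W X Y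
          - tachibana (fun a b => g a b) (fun a b => Ricg a b) U W X Y) ∧
    (∀ U W X Y : V,
      curvDot Ric4 R4 U W X Y =
        curvDot (fun a b => Ricg a b) (fun a b c => Rg a b c) U W X Y
          - tachibana (fun a b => g a b) (fun a b => Ricg a b) U W X Y
          - ((n : ℝ) - 1) *
              tachibana (fun a b => g a b) (fun a b => π a * π b) U W X Y
          + tachibana (fun a b => Ricg a b) (fun a b => π a * π b) U W X Y) := by
  refine ⟨?_, ?_, ?_⟩ <;> intro U W X Y <;>
  · have hc := hπRg X Y U
    have hd := hπRg X Y W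
    simp only [hπ] at hc hd
    have hb : g U (Rg X Y W) = - g (Rg X Y U) W := by
      rw [hgsymm, hskew X Y W U]
    simp only [curvDot, tachibana, hRic0, hRic1, hRic4, hπ, hR0, hR1, hR4,
      map_add, map_sub, map_smul, LinearMap.add_apply, LinearMap.sub_apply,
      LinearMap.smul_apply, smul_eq_mul]
    rw [hb]; try rw [hc]; try rw [hd]
    simp only [hgsymm, hRicsymm]
    ring
end

section
/- Let V be a real vector space with 3 ≤ dim V = n < ∞, g a symmetric bilinear form on V, P ∈ V with g(P,P) = −1, and π(X) = g(X,P). Let Rg be a curvature-type tensor satisfying g(Rg(X,Y)U,V) = −g(Rg(X,Y)V,U) for all X,Y,U,V ∈ V, and let Ricg be a symmetric bilinear form on V. Define R1(X,Y)Z = Rg(X,Y)Z + g(X,Z)Y − g(Y,Z)X and Ric1 = Ricg − (n−1)g. Then R1·Ric1 = 0 if and only if Rg·Ricg = Q(g,Ricg). -/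
/-- Pointwise algebraic form: in a GRW space-time with a semi-symmetric metric
`P`-connection, `R1·Ric1 = 0` holds if and only if `Rg·Ricg = Q(g,Ricg)`. -/
theorem stmt_7 {V : Type*} [AddCommGroup V] [Module ℝ V] [FiniteDimensional ℝ V]
    (n : ℕ) (hn : Module.finrank ℝ V = n) (hn3 : 3 ≤ n)
    (g : V →ₗ[ℝ] V →ₗ[ℝ] ℝ)
    (hgsymm : ∀ X Y : V, g X Y = g Y X)
    (P : V) (hPP : g P P = -1)
    (π : V → ℝ) (hπ : ∀ X : V, π X = g X P)
    (Rg : V →ₗ[ℝ] V →ₗ[ℝ] V →ₗ[ℝ] V)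
    (hskew : ∀ X Y U W : V, g (Rg X Y U) W = - g (Rg X Y W) U)
    (Ricg : V →ₗ[ℝ] V →ₗ[ℝ] ℝ)
    (hRicsymm : ∀ X Y : V, Ricg X Y = Ricg Y X)
    (R1 : V → V → V → V)
    (hR1 : ∀ X Y Z : V, R1 X Y Z = Rg X Y Z + g X Z • Y - g Y Z • X)
    (Ric1 : V → V → ℝ)
    (hRic1 : ∀ X Y : V, Ric1 X Y = Ricg X Y - ((n : ℝ) - 1) * g X Y) :
    (∀ U W X Y : V, curvDot Ric1 R1 U W X Y = 0) ↔
      (∀ U W X Y : V,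
        curvDot (fun a b => Ricg a b) (fun a b c => Rg a b c) U W X Y =
          tachibana (fun a b => g a b) (fun a b => Ricg a b) U W X Y) := by
  have key : ∀ U W X Y : V, curvDot Ric1 R1 U W X Y =
      curvDot (fun a b => Ricg a b) (fun a b c => Rg a b c) U W X Y -
        tachibana (fun a b => g a b) (fun a b => Ricg a b) U W X Y := by
    intro U W X Y
    have hs := hskew X Y U W
    have hg1 := hgsymm U (Rg X Y W)
    simp only [curvDot, tachibana, hR1, hRic1, map_add, map_sub, map_smul,
      LinearMap.add_apply, LinearMap.sub_apply, LinearMap.smul_apply, smul_eq_mul]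
    linear_combination ((n:ℝ)-1) * hs + ((n:ℝ)-1) * hg1 +
      ((n:ℝ)-1) * (g X W) * (hgsymm U Y) - ((n:ℝ)-1) * (g Y W) * (hgsymm U X)
  constructor
  · intro h U W X Y
    have := key U W X Y
    have h0 := h U W X Y
    linarith
  · intro h U W X Y
    have := key U W X Y
    have h0 := h U W X Y
    linarith
end

section
/- Let V be a real vector space with 3 ≤ dim V = n < ∞, g a symmetric bilinear form on V, P ∈ V with g(P,P) = −1, π(X) = g(X,P), and Π(X,Y) = π(X)π(Y). Let Rg be a curvature-type tensor satisfying g(Rg(X,Y)U,V) = −g(Rg(X,Y)V,U), Rg(P,Y)Z = g(Y,Z)P − π(Z)Y, and π(Rg(X,Y)Z) = π(X)g(Y,Z) − π(Y)g(X,Z) for all X,Y,Z,U,V ∈ V, and let Ricg be a symmetric bilinear form with Ricg(P,X) = (n−1)π(X). With R0, R4 and Ric0, Ric4 defined as in the context, the following are equivalent: (a) Ricg = (n−1)g (the manifold is Einstein); (b) R0·Ric0 = 0; (c) R4·Ric4 = 0. -/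
/-- Pointwise algebraic form: a GRW space-time with a semi-symmetric metric
`P`-connection is an Einstein manifold if and only if `Rα·Ricα = 0`, `α = 0,4`. -/
theorem stmt_8 {V : Type*} [AddCommGroup V] [Module ℝ V] [FiniteDimensional ℝ V]
    (n : ℕ) (hn : Module.finrank ℝ V = n) (hn3 : 3 ≤ n)
    (g : V →ₗ[ℝ] V →ₗ[ℝ] ℝ)
    (hgsymm : ∀ X Y : V, g X Y = g Y X)
    (P : V) (hPP : g P P = -1)
    (π : V → ℝ) (hπ : ∀ X : V, π X = g X P)
    (Rg : V →ₗ[ℝ] V →ₗ[ℝ] V →ₗ[ℝ] V)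
    (hskew : ∀ X Y U W : V, g (Rg X Y U) W = - g (Rg X Y W) U)
    (hRgP : ∀ Y Z : V, Rg P Y Z = g Y Z • P - π Z • Y)
    (hπRg : ∀ X Y Z : V, π (Rg X Y Z) = π X * g Y Z - π Y * g X Z)
    (Ricg : V →ₗ[ℝ] V →ₗ[ℝ] ℝ)
    (hRicsymm : ∀ X Y : V, Ricg X Y = Ricg Y X)
    (hRicP : ∀ X : V, Ricg P X = ((n : ℝ) - 1) * π X)
    (R0 R4 : V → V → V → V)
    (hR0 : ∀ X Y Z : V, R0 X Y Z =
      Rg X Y Z + g X Z • Y - g Y Z • X - ((1:ℝ)/4 * π Z) • (π Y • X - π X • Y))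
    (hR4 : ∀ X Y Z : V, R4 X Y Z =
      Rg X Y Z + g X Z • Y - g Y Z • X - π Z • (π Y • X - π X • Y))
    (Ric0 Ric4 : V → V → ℝ)
    (hRic0 : ∀ X Y : V, Ric0 X Y =
      Ricg X Y - ((n : ℝ) - 1)/4 * (4 * g X Y + π X * π Y))
    (hRic4 : ∀ X Y : V, Ric4 X Y =
      Ricg X Y - ((n : ℝ) - 1) * (g X Y + π X * π Y)) :
    ((∀ X Y : V, Ricg X Y = ((n : ℝ) - 1) * g X Y) ↔
      (∀ U W X Y : V, curvDot Ric0 R0 U W X Y = 0)) ∧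
    ((∀ X Y : V, Ricg X Y = ((n : ℝ) - 1) * g X Y) ↔
      (∀ U W X Y : V, curvDot Ric4 R4 U W X Y = 0)) := by
  have hgP : ∀ X : V, g P X = g X P := fun X => hgsymm P X
  have hgRgP : ∀ X Y Z : V, g (Rg X Y Z) P = g X P * g Y Z - g Y P * g X Z := by
    intro X Y Z; rw [← hπ, hπRg, hπ, hπ]
  have hRicP' : ∀ X : V, Ricg X P = ((n : ℝ) - 1) * g X P := by
    intro X; rw [hRicsymm, hRicP, hπ]
  have hRicP2 : ∀ X : V, Ricg P X = ((n : ℝ) - 1) * g X P := by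
    intro X; rw [hRicP, hπ]
  constructor
  · constructor
    · intro hE U W X Y
      have hRic0' : ∀ A B : V, Ric0 A B = -(((n:ℝ)-1)/4) * (g A P * g B P) := by
        intro A B; rw [hRic0, hE, hπ, hπ]; ring
      simp only [curvDot, hRic0', hR0, hπ, map_add, map_sub, map_smul,
        LinearMap.add_apply, LinearMap.sub_apply, LinearMap.smul_apply,
        smul_eq_mul, hgRgP, hPP, hgP]
      ring
    · intro h A B
      have key := h P B P A
      simp only [curvDot, hRic0, hR0, hRgP, hπ, map_add, map_sub, map_smul,
        LinearMap.add_apply, LinearMap.sub_apply, LinearMap.smul_apply,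
        smul_eq_mul, hgRgP, hRicP', hRicP2, hPP, hgP] at key
      linear_combination (-4 : ℝ) * key
  · constructor
    · intro hE U W X Y
      have hRic4' : ∀ A B : V, Ric4 A B = -(((n:ℝ)-1)) * (g A P * g B P) := by
        intro A B; rw [hRic4, hE, hπ, hπ]; ring
      simp only [curvDot, hRic4', hR4, hπ, map_add, map_sub, map_smul,
        LinearMap.add_apply, LinearMap.sub_apply, LinearMap.smul_apply,
        smul_eq_mul, hgRgP, hPP, hgP]
      ring
    · intro h A B
      have key := h P B P A
      simp only [curvDot, hRic4, hR4, hRgP, hπ, map_add, map_sub, map_smul,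
        LinearMap.add_apply, LinearMap.sub_apply, LinearMap.smul_apply,
        smul_eq_mul, hgRgP, hRicP', hRicP2, hPP, hgP] at key
      linear_combination (-1 : ℝ) * key
end

section
/- Let V be a real vector space with 3 ≤ dim V = n < ∞, g a symmetric bilinear form on V, P ∈ V with g(P,P) = −1, π(X) = g(X,P), and Π(X,Y) = π(X)π(Y). Let Rg be a curvature-type tensor satisfying g(Rg(X,Y)U,V) = −g(Rg(X,Y)V,U), Rg(P,Y)Z = g(Y,Z)P − π(Z)Y, and π(Rg(X,Y)Z) = π(X)g(Y,Z) − π(Y)g(X,Z) for all X,Y,Z,U,V ∈ V, and let Ricg be a symmetric bilinear form with Ricg(P,X) = (n−1)π(X). Define R5(X,Y)Z = Rg(X,Y)Z + g(X,Z)Y − g(Y,Z)X − (1/2)π(Y)(π(Z)X − π(X)Z) and Ric5 = Ricg − ((n−1)/2)(2g + Π). Then Ricg = (n−1)g (the manifold is Einstein) if and only if R5·Ric5 = Rg·Ricg. -/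
/-- Pointwise algebraic form: a GRW space-time with a semi-symmetric metric
`P`-connection is an Einstein manifold if and only if `R5·Ric5 = Rg·Ricg`. -/
theorem stmt_9 {V : Type*} [AddCommGroup V] [Module ℝ V] [FiniteDimensional ℝ V]
    (n : ℕ) (hn : Module.finrank ℝ V = n) (hn3 : 3 ≤ n)
    (g : V →ₗ[ℝ] V →ₗ[ℝ] ℝ)
    (hgsymm : ∀ X Y : V, g X Y = g Y X)
    (P : V) (hPP : g P P = -1)
    (π : V → ℝ) (hπ : ∀ X : V, π X = g X P)
    (Rg : V →ₗ[ℝ] V →ₗ[ℝ] V →ₗ[ℝ] V)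
    (hskew : ∀ X Y U W : V, g (Rg X Y U) W = - g (Rg X Y W) U)
    (hRgP : ∀ Y Z : V, Rg P Y Z = g Y Z • P - π Z • Y)
    (hπRg : ∀ X Y Z : V, π (Rg X Y Z) = π X * g Y Z - π Y * g X Z)
    (Ricg : V →ₗ[ℝ] V →ₗ[ℝ] ℝ)
    (hRicsymm : ∀ X Y : V, Ricg X Y = Ricg Y X)
    (hRicP : ∀ X : V, Ricg P X = ((n : ℝ) - 1) * π X)
    (R5 : V → V → V → V)
    (hR5 : ∀ X Y Z : V, R5 X Y Z =
      Rg X Y Z + g X Z • Y - g Y Z • X - ((1:ℝ)/2 * π Y) • (π Z • X - π X • Z))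
    (Ric5 : V → V → ℝ)
    (hRic5 : ∀ X Y : V, Ric5 X Y =
      Ricg X Y - ((n : ℝ) - 1)/2 * (2 * g X Y + π X * π Y)) :
    (∀ X Y : V, Ricg X Y = ((n : ℝ) - 1) * g X Y) ↔
      (∀ U W X Y : V, curvDot Ric5 R5 U W X Y =
        curvDot (fun a b => Ricg a b) (fun a b c => Rg a b c) U W X Y) := by
  have hπP : π P = -1 := by rw [hπ]; exact hPP
  have hπR5 : ∀ X Y Z : V, π (R5 X Y Z) = 0 := by
    intro X Y Z
    have h1 := hπRg X Y Z
    rw [hπ] at h1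
    rw [hR5, hπ]
    simp only [map_add, map_sub, map_smul, LinearMap.add_apply, LinearMap.sub_apply,
      LinearMap.smul_apply, smul_eq_mul]
    rw [h1]
    simp only [hπ]
    ring
  constructor
  · intro hE U W X Y
    have hRic5' : ∀ a b : V, Ric5 a b = -(((n:ℝ)-1)/2) * (π a * π b) := by
      intro a b; rw [hRic5, hE]; ring
    simp only [curvDot, hRic5', hπR5]
    rw [hE, hE]
    have : g U (Rg X Y W) = - g (Rg X Y U) W := by
      rw [hgsymm, hskew]
    rw [this]
    ring
  · intro h U W
    have hRgPP : ∀ Z : V, Rg P P Z = 0 := by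
      intro Z
      rw [hRgP, hπ, hgsymm P Z, sub_self]
    have hR5PP : ∀ Z : V, R5 P P Z = ((1:ℝ)/2) • (π Z • P + Z) := by
      intro Z
      rw [hR5, hRgPP, hπP, hgsymm P Z]
      rw [hπ]
      module
    have key := h U W P P
    simp only [curvDot, hRgPP, map_zero, LinearMap.zero_apply, neg_zero, sub_zero,
      zero_sub, add_zero] at key
    rw [hRic5, hRic5, hπR5, hπR5, hR5PP, hR5PP] at key
    simp only [map_add, map_smul, LinearMap.add_apply, LinearMap.smul_apply,
      smul_eq_mul] at key
    rw [hRicP, hRicsymm U P, hRicP, hgsymm P W] at key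
    simp only [hπ, hgsymm U P] at key
    nlinarith [key]
end

section
/- Let V be a real vector space with 3 ≤ dim V = n < ∞, g a symmetric bilinear form on V, P ∈ V, π(X) = g(X,P), and Π(X,Y) = π(X)π(Y). Let Rg be a curvature-type tensor satisfying g(Rg(X,Y)U,V) = −g(Rg(X,Y)V,U) and π(Rg(X,Y)Z) = π(X)g(Y,Z) − π(Y)g(X,Z) for all X,Y,Z,U,V ∈ V. Suppose Ricg = a·g + b·Π for some real numbers a, b (perfect fluid space-time). Then Rg·Ricg = Q(g,Ricg), i.e., the manifold is Ricci pseudo-symmetric of constant type with constant 1. -/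
/-- Pointwise algebraic form: a perfect fluid space-time with a semi-symmetric metric
`P`-connection is Ricci pseudo-symmetric of constant type with `Rg·Ricg = Q(g,Ricg)`. -/
theorem stmt_10 {V : Type*} [AddCommGroup V] [Module ℝ V] [FiniteDimensional ℝ V]
    (n : ℕ) (hn : Module.finrank ℝ V = n) (hn3 : 3 ≤ n)
    (g : V →ₗ[ℝ] V →ₗ[ℝ] ℝ)
    (hgsymm : ∀ X Y : V, g X Y = g Y X)
    (P : V) (π : V → ℝ) (hπ : ∀ X : V, π X = g X P)
    (Rg : V →ₗ[ℝ] V →ₗ[ℝ] V →ₗ[ℝ] V)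
    (hskew : ∀ X Y U W : V, g (Rg X Y U) W = - g (Rg X Y W) U)
    (hπRg : ∀ X Y Z : V, π (Rg X Y Z) = π X * g Y Z - π Y * g X Z)
    (Ricg : V →ₗ[ℝ] V →ₗ[ℝ] ℝ)
    (a b : ℝ)
    (hpf : ∀ X Y : V, Ricg X Y = a * g X Y + b * (π X * π Y)) :
    ∀ U W X Y : V,
      curvDot (fun x y => Ricg x y) (fun x y z => Rg x y z) U W X Y =
        tachibana (fun x y => g x y) (fun x y => Ricg x y) U W X Y := by
  intro U W X Y
  simp only [curvDot, tachibana, map_sub, map_smul, LinearMap.sub_apply,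
    LinearMap.smul_apply, smul_eq_mul, hpf]
  have h1 := hπRg X Y U
  have h2 := hπRg X Y W
  have h3 := hskew X Y U W
  have h4 := hskew X Y W U
  rw [h1, h2, h3]
  simp only [hπ, map_sub, map_smul, LinearMap.sub_apply, LinearMap.smul_apply, smul_eq_mul]
  rw [hgsymm U (Rg X Y W), hgsymm U X, hgsymm U Y]
  ring
end

section
/- Let V be a real vector space with 3 ≤ dim V = n < ∞, g a symmetric bilinear form on V, P ∈ V, π(X) = g(X,P), and Π(X,Y) = π(X)π(Y). Let Rg be a curvature-type tensor satisfying g(Rg(X,Y)U,V) = −g(Rg(X,Y)V,U) and π(Rg(X,Y)Z) = π(X)g(Y,Z) − π(Y)g(X,Z) for all X,Y,Z,U,V ∈ V. Suppose Ricg = a·g + b·Π for some real numbers a, b (perfect fluid space-time). Define R1(X,Y)Z = Rg(X,Y)Z + g(X,Z)Y − g(Y,Z)X and Ric1 = Ricg − (n−1)g. Then R1·Ric1 = 0. -/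
/-- Pointwise algebraic form: a perfect fluid space-time with a semi-symmetric metric
`P`-connection satisfies `R1·Ric1 = 0`. -/
theorem stmt_11 {V : Type*} [AddCommGroup V] [Module ℝ V] [FiniteDimensional ℝ V]
    (n : ℕ) (hn : Module.finrank ℝ V = n) (hn3 : 3 ≤ n)
    (g : V →ₗ[ℝ] V →ₗ[ℝ] ℝ)
    (hgsymm : ∀ X Y : V, g X Y = g Y X)
    (P : V) (π : V → ℝ) (hπ : ∀ X : V, π X = g X P)
    (Rg : V →ₗ[ℝ] V →ₗ[ℝ] V →ₗ[ℝ] V)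
    (hskew : ∀ X Y U W : V, g (Rg X Y U) W = - g (Rg X Y W) U)
    (hπRg : ∀ X Y Z : V, π (Rg X Y Z) = π X * g Y Z - π Y * g X Z)
    (Ricg : V →ₗ[ℝ] V →ₗ[ℝ] ℝ)
    (a b : ℝ)
    (hpf : ∀ X Y : V, Ricg X Y = a * g X Y + b * (π X * π Y))
    (R1 : V → V → V → V)
    (hR1 : ∀ X Y Z : V, R1 X Y Z = Rg X Y Z + g X Z • Y - g Y Z • X)
    (Ric1 : V → V → ℝ)
    (hRic1 : ∀ X Y : V, Ric1 X Y = Ricg X Y - ((n : ℝ) - 1) * g X Y) :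
    ∀ U W X Y : V, curvDot Ric1 R1 U W X Y = 0 := by
  intro U W X Y
  simp only [curvDot, hR1, hRic1, hpf, hπ, map_add, map_sub, map_smul,
    LinearMap.add_apply, LinearMap.sub_apply, LinearMap.smul_apply, smul_eq_mul]
  have h1 := hskew X Y U W
  have h2 : g (Rg X Y U) P = g X P * g Y U - g Y P * g X U := by
    have := hπRg X Y U; simpa [hπ] using this
  have h3 : g (Rg X Y W) P = g X P * g Y W - g Y P * g X W := by
    have := hπRg X Y W; simpa [hπ] using this
  have h4 := hgsymm X U
  have h5 := hgsymm Y U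
  have h6 := hgsymm X W
  have h7 := hgsymm Y W
  have h9 := hgsymm (Rg X Y W) U
  rw [← h9, h1, h2, h3, h4, h5, h6, h7]
  ring
end

section
/- Let V be a real vector space with dim V = 4, g a symmetric bilinear form on V, and Ricg a bilinear form on V. Let S be a curvature-type tensor satisfying g(S(X,Y)U,V) = −g(S(X,Y)V,U) for all X,Y,U,V ∈ V. Let k ≠ 0 and r be real numbers and let τ be the bilinear form determined by Einstein's field equations without cosmological constant, Ricg − (r/2)g = k·τ. Then for any real number f: S·τ = f·Q(g,τ) holds if and only if S·Ricg = f·Q(g,Ricg) holds. -/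
/-- Pointwise algebraic form: for a 4-dimensional space-time satisfying Einstein's
field equations without cosmological constant `Ricg − (r/2)g = kτ`, and a skew
curvature-type tensor `S`, one has `S·τ = f·Q(g,τ)` iff `S·Ricg = f·Q(g,Ricg)`. -/
theorem stmt_13 {V : Type*} [AddCommGroup V] [Module ℝ V] [FiniteDimensional ℝ V]
    (hn : Module.finrank ℝ V = 4)
    (g : V →ₗ[ℝ] V →ₗ[ℝ] ℝ)
    (hgsymm : ∀ X Y : V, g X Y = g Y X)
    (Ricg : V →ₗ[ℝ] V →ₗ[ℝ] ℝ)
    (S : V →ₗ[ℝ] V →ₗ[ℝ] V →ₗ[ℝ] V)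
    (hskew : ∀ X Y U W : V, g (S X Y U) W = - g (S X Y W) U)
    (k r : ℝ) (hk : k ≠ 0)
    (τ : V →ₗ[ℝ] V →ₗ[ℝ] ℝ)
    (hτ : ∀ X Y : V, Ricg X Y - r/2 * g X Y = k * τ X Y) :
    ∀ f : ℝ,
      (∀ U W X Y : V,
        curvDot (fun x y => τ x y) (fun x y z => S x y z) U W X Y =
          f * tachibana (fun x y => g x y) (fun x y => τ x y) U W X Y) ↔
      (∀ U W X Y : V,
        curvDot (fun x y => Ricg x y) (fun x y z => S x y z) U W X Y =
          f * tachibana (fun x y => g x y) (fun x y => Ricg x y) U W X Y) := by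
  have hric : ∀ X Y : V, Ricg X Y = k * τ X Y + r/2 * g X Y := fun X Y => by
    have := hτ X Y; linarith
  -- curvDot of g vanishes
  have hCg : ∀ U W X Y : V,
      curvDot (fun x y => g x y) (fun x y z => S x y z) U W X Y = 0 := by
    intro U W X Y
    simp only [curvDot]
    rw [hskew X Y U W, hgsymm U (S X Y W)]
    ring
  -- tachibana g g vanishes
  have hTg : ∀ U W X Y : V,
      tachibana (fun x y => g x y) (fun x y => g x y) U W X Y = 0 := by
    intro U W X Y
    simp only [tachibana, map_sub, map_smul, LinearMap.sub_apply, LinearMap.smul_apply,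
      smul_eq_mul]
    rw [hgsymm X W, hgsymm Y W, hgsymm U X, hgsymm U Y]
    ring
  -- linear expansions
  have hC : ∀ U W X Y : V,
      curvDot (fun x y => Ricg x y) (fun x y z => S x y z) U W X Y =
        k * curvDot (fun x y => τ x y) (fun x y z => S x y z) U W X Y +
        r/2 * curvDot (fun x y => g x y) (fun x y z => S x y z) U W X Y := by
    intro U W X Y
    simp only [curvDot, hric]
    ring
  have hT : ∀ U W X Y : V,
      tachibana (fun x y => g x y) (fun x y => Ricg x y) U W X Y =
        k * tachibana (fun x y => g x y) (fun x y => τ x y) U W X Y +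
        r/2 * tachibana (fun x y => g x y) (fun x y => g x y) U W X Y := by
    intro U W X Y
    simp only [tachibana, map_sub, map_smul, LinearMap.sub_apply, LinearMap.smul_apply,
      smul_eq_mul, hric]
    ring
  intro f
  constructor
  · intro h U W X Y
    rw [hC, hT, hTg, hCg, h U W X Y]
    ring
  · intro h U W X Y
    have := h U W X Y
    rw [hC, hT, hTg, hCg] at this
    have h2 : k * (curvDot (fun x y => τ x y) (fun x y z => S x y z) U W X Y -
        f * tachibana (fun x y => g x y) (fun x y => τ x y) U W X Y) = 0 := by ring_nf; linarith
    have := mul_eq_zero.mp h2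
    rcases this with h3 | h3
    · exact absurd h3 hk
    · linarith
end

section
/- Let V be a real vector space with dim V = 4, g a symmetric bilinear form on V, P ∈ V, π(X) = g(X,P), and Π(X,Y) = π(X)π(Y). Let Rg be a curvature-type tensor satisfying g(Rg(X,Y)U,V) = −g(Rg(X,Y)V,U) and π(Rg(X,Y)Z) = π(X)g(Y,Z) − π(Y)g(X,Z) for all X,Y,Z,U,V ∈ V. Suppose Ricg = a·g + b·Π for some real numbers a, b (perfect fluid space-time), and let k ≠ 0 and r be real numbers with τ the bilinear form determined by Ricg − (r/2)g = k·τ (Einstein's field equations without cosmological constant). Then Rg·τ = Q(g,τ). -/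
/-- Pointwise algebraic form: a perfect fluid space-time with a semi-symmetric metric
`P`-connection satisfying Einstein's field equations without the cosmological constant
satisfies `Rg·τ = Q(g,τ)`. -/
theorem stmt_14 {V : Type*} [AddCommGroup V] [Module ℝ V] [FiniteDimensional ℝ V]
    (hn : Module.finrank ℝ V = 4)
    (g : V →ₗ[ℝ] V →ₗ[ℝ] ℝ)
    (hgsymm : ∀ X Y : V, g X Y = g Y X)
    (P : V) (π : V → ℝ) (hπ : ∀ X : V, π X = g X P)
    (Rg : V →ₗ[ℝ] V →ₗ[ℝ] V →ₗ[ℝ] V)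
    (hskew : ∀ X Y U W : V, g (Rg X Y U) W = - g (Rg X Y W) U)
    (hπRg : ∀ X Y Z : V, π (Rg X Y Z) = π X * g Y Z - π Y * g X Z)
    (Ricg : V →ₗ[ℝ] V →ₗ[ℝ] ℝ)
    (a b : ℝ)
    (hpf : ∀ X Y : V, Ricg X Y = a * g X Y + b * (π X * π Y))
    (k r : ℝ) (hk : k ≠ 0)
    (τ : V →ₗ[ℝ] V →ₗ[ℝ] ℝ)
    (hτ : ∀ X Y : V, Ricg X Y - r/2 * g X Y = k * τ X Y) :
    ∀ U W X Y : V,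
      curvDot (fun x y => τ x y) (fun x y z => Rg x y z) U W X Y =
        tachibana (fun x y => g x y) (fun x y => τ x y) U W X Y := by
  have hτ' : ∀ X Y : V, τ X Y = ((a - r/2) * g X Y + b * (π X * π Y)) / k := by
    intro X Y
    have h1 := hτ X Y
    rw [hpf X Y] at h1
    field_simp
    linarith
  intro U W X Y
  simp only [curvDot, tachibana, map_sub, map_smul, LinearMap.sub_apply,
    LinearMap.smul_apply, smul_eq_mul]
  rw [hτ', hτ', hτ', hτ', hτ', hτ', hπRg, hπRg, hskew X Y U W]
  field_simp
  linear_combination (2*a - r) * g Y W * hgsymm U X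
    + (r - 2*a) * g X W * hgsymm U Y
    + (r - 2*a) * hgsymm U (Rg X Y W)
end

section
/- Let V be a real vector space with dim V = n = 4, g a symmetric bilinear form on V, P ∈ V with g(P,P) = −1, π(X) = g(X,P), and Π(X,Y) = π(X)π(Y). Let Rg be a curvature-type tensor satisfying g(Rg(X,Y)U,V) = −g(Rg(X,Y)V,U), Rg(P,Y)Z = g(Y,Z)P − π(Z)Y, and π(Rg(X,Y)Z) = π(X)g(Y,Z) − π(Y)g(X,Z) for all X,Y,Z,U,V ∈ V, and let Ricg be a symmetric bilinear form with Ricg(P,X) = 3π(X). Define R0(X,Y)Z = Rg(X,Y)Z + g(X,Z)Y − g(Y,Z)X − (1/4)π(Z)(π(Y)X − π(X)Y) and Ric0 = Ricg − (3/4)(4g + Π). If R0·Ric0 = 0, then Ric0 = −(3/4)Π. -/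
set_option maxHeartbeats 2000000


/-- Pointwise algebraic form: a 4-dimensional GRW space-time with a semi-symmetric
metric `P`-connection satisfying `R0·Ric0 = 0` is a stiff matter fluid with respect to
the associated symmetric connection, i.e. `Ric0 = −(3/4)·π⊗π`. -/
theorem stmt_15 {V : Type*} [AddCommGroup V] [Module ℝ V] [FiniteDimensional ℝ V]
    (hn : Module.finrank ℝ V = 4)
    (g : V →ₗ[ℝ] V →ₗ[ℝ] ℝ)
    (hgsymm : ∀ X Y : V, g X Y = g Y X)
    (P : V) (hPP : g P P = -1)
    (π : V → ℝ) (hπ : ∀ X : V, π X = g X P)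
    (Rg : V →ₗ[ℝ] V →ₗ[ℝ] V →ₗ[ℝ] V)
    (hskew : ∀ X Y U W : V, g (Rg X Y U) W = - g (Rg X Y W) U)
    (hRgP : ∀ Y Z : V, Rg P Y Z = g Y Z • P - π Z • Y)
    (hπRg : ∀ X Y Z : V, π (Rg X Y Z) = π X * g Y Z - π Y * g X Z)
    (Ricg : V →ₗ[ℝ] V →ₗ[ℝ] ℝ)
    (hRicsymm : ∀ X Y : V, Ricg X Y = Ricg Y X)
    (hRicP : ∀ X : V, Ricg P X = 3 * π X)
    (R0 : V → V → V → V)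
    (hR0 : ∀ X Y Z : V, R0 X Y Z =
      Rg X Y Z + g X Z • Y - g Y Z • X - ((1:ℝ)/4 * π Z) • (π Y • X - π X • Y))
    (Ric0 : V → V → ℝ)
    (hRic0 : ∀ X Y : V, Ric0 X Y =
      Ricg X Y - (3:ℝ)/4 * (4 * g X Y + π X * π Y))
    (hsemi : ∀ U W X Y : V, curvDot Ric0 R0 U W X Y = 0) :
    ∀ X Y : V, Ric0 X Y = -((3:ℝ)/4) * (π X * π Y) := by
  intro X Y
  have key := hsemi P Y P X
  simp only [curvDot, hR0, hRgP, hRic0, hπ, hPP, map_add, map_sub, map_smul,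
    LinearMap.add_apply, LinearMap.sub_apply, LinearMap.smul_apply, smul_eq_mul,
    smul_sub, smul_smul] at key ⊢
  have hgPX : g P X = g X P := hgsymm P X
  have hgPY : g P Y = g Y P := hgsymm P Y
  have hRXP : Ricg X P = 3 * g X P := by rw [hRicsymm, hRicP, hπ]
  have hRYP : Ricg Y P = 3 * g Y P := by rw [hRicsymm, hRicP, hπ]
  have hRPP : Ricg P P = -3 := by have := hRicP P; rw [hπ, hPP] at this; linarith
  have hRPX : Ricg P X = 3 * g X P := by rw [hRicP, hπ]
  have hRPY : Ricg P Y = 3 * g Y P := by rw [hRicP, hπ]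
  simp only [hgPX, hgPY, hRXP, hRYP, hRPP, hRPX, hRPY, hPP] at key ⊢
  nlinarith [key]
end

section
/- Let V be a real vector space with dim V = 4, g a symmetric bilinear form on V, P ∈ V with g(P,P) = −1, π(X) = g(X,P), and Π(X,Y) = π(X)π(Y). Let k, σ, p be real numbers with k > 0 (gravitational constant, energy density and isotropic pressure), and suppose the Ricci tensor has the perfect-fluid form derived from Einstein's field equations without cosmological constant, Ricg = (k(σ−p)/2)·g + k(σ+p)·Π, together with Ricg(P,X) = 3π(X) for all X ∈ V. Then k(σ + 3p) = −6, and consequently σ + 3p < 0, i.e., the strong energy condition (σ + 3p ≥ 0) is violated. -/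
/-- Pointwise algebraic form: in a 4-dimensional perfect fluid space-time with a
semi-symmetric metric `P`-connection satisfying Einstein's field equations without the
cosmological constant, `k(σ + 3p) = −6` and hence the strong energy condition
`σ + 3p ≥ 0` is violated. -/
theorem stmt_16 {V : Type*} [AddCommGroup V] [Module ℝ V] [FiniteDimensional ℝ V]
    (hn : Module.finrank ℝ V = 4)
    (g : V →ₗ[ℝ] V →ₗ[ℝ] ℝ)
    (hgsymm : ∀ X Y : V, g X Y = g Y X)
    (P : V) (hPP : g P P = -1)
    (π : V → ℝ) (hπ : ∀ X : V, π X = g X P)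
    (k σ p : ℝ) (hk : 0 < k)
    (Ricg : V →ₗ[ℝ] V →ₗ[ℝ] ℝ)
    (hRic : ∀ X Y : V, Ricg X Y =
      k * (σ - p)/2 * g X Y + k * (σ + p) * (π X * π Y))
    (hRicP : ∀ X : V, Ricg P X = 3 * π X) :
    k * (σ + 3 * p) = -6 ∧ σ + 3 * p < 0 := by
  have h1 := hRic P P
  have h2 := hRicP P
  have hπP : π P = -1 := by rw [hπ]; exact hPP
  rw [h2, hπP, hPP] at h1
  have hmain : k * (σ + 3 * p) = -6 := by nlinarith
  refine ⟨hmain, ?_⟩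
  nlinarith
end

section
/- Let V be a real vector space with dim V = n = 4, g a symmetric bilinear form on V, P ∈ V with g(P,P) = −1, and π(X) = g(X,P); write Π(X,Y) = π(X)π(Y). Let Rg be a curvature-type tensor satisfying Rg(P,Y)Z = g(Y,Z)P − π(Z)Y for all Y,Z ∈ V, and let Ricg be a symmetric bilinear form with Ricg(P,X) = 3π(X) for all X ∈ V. Suppose Ricg = (k(σ−p)/2)·g + k(σ+p)·Π for real numbers k ≠ 0, σ, p, suppose there exists X ∈ V with g(X,P) = 0 and g(X,X) ≠ 0, and suppose Ricg(Rg(X,Y)U,V) + Ricg(U,Rg(X,Y)V) = 0 for all X,Y,U,V ∈ V (Ricci semi-symmetry). Then σ + p = 0 (the equation of state represents a phantom barrier). -/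
/-- Pointwise algebraic form: if a 4-dimensional perfect fluid space-time with a
semi-symmetric metric `P`-connection satisfying Einstein's field equations without
the cosmological constant is Ricci semi-symmetric, then `σ + p = 0` (the equation of
state represents a phantom barrier). -/
theorem stmt_17 {V : Type*} [AddCommGroup V] [Module ℝ V] [FiniteDimensional ℝ V]
    (hn : Module.finrank ℝ V = 4)
    (g : V →ₗ[ℝ] V →ₗ[ℝ] ℝ)
    (hgsymm : ∀ X Y : V, g X Y = g Y X)
    (P : V) (hPP : g P P = -1)
    (π : V → ℝ) (hπ : ∀ X : V, π X = g X P)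
    (Rg : V →ₗ[ℝ] V →ₗ[ℝ] V →ₗ[ℝ] V)
    (hRgP : ∀ Y Z : V, Rg P Y Z = g Y Z • P - π Z • Y)
    (Ricg : V →ₗ[ℝ] V →ₗ[ℝ] ℝ)
    (hRicsymm : ∀ X Y : V, Ricg X Y = Ricg Y X)
    (hRicP : ∀ X : V, Ricg P X = 3 * π X)
    (k σ p : ℝ) (hk : k ≠ 0)
    (hRic : ∀ X Y : V, Ricg X Y =
      k * (σ - p)/2 * g X Y + k * (σ + p) * (π X * π Y))
    (hex : ∃ X : V, g X P = 0 ∧ g X X ≠ 0)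
    (hsemi : ∀ X Y U W : V, Ricg (Rg X Y U) W + Ricg U (Rg X Y W) = 0) :
    σ + p = 0 := by
  obtain ⟨X, hXP, hXX⟩ := hex
  have hπX : π X = 0 := by rw [hπ]; exact hXP
  have hπP : π P = -1 := by rw [hπ]; exact hPP
  -- Rg P X X = g X X • P
  have h1 : Rg P X X = g X X • P := by
    rw [hRgP, hπX, zero_smul, sub_zero]
  -- Rg P X P = X
  have h2 : Rg P X P = X := by
    rw [hRgP, hπP, hXP]
    simp
  have hs := hsemi P X X P
  rw [h1, h2] at hs
  simp only [map_smul, LinearMap.smul_apply, smul_eq_mul] at hs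
  have hRPP : Ricg P P = -3 := by rw [hRicP, hπP]; ring
  have hRXX : Ricg X X = k * (σ - p)/2 * g X X := by
    rw [hRic, hπX]; ring
  rw [hRPP, hRXX] at hs
  -- g X X * (-3) + k(σ-p)/2 * g X X = 0 ⇒ k(σ-p)/2 = 3
  have hhalf : k * (σ - p)/2 = 3 := by
    exact mul_right_cancel₀ hXX (by linarith : k * (σ - p)/2 * g X X = 3 * g X X)
  have hPPric := hRic P P
  rw [hRPP, hPP, hπP] at hPPric
  have hksp : k * (σ + p) = 0 := by nlinarith [hPPric, hhalf]
  rcases mul_eq_zero.mp hksp with h | h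
  · exact absurd h hk
  · exact h
end

section
/- Let V be a real vector space with dim V = n = 4, g a symmetric bilinear form on V, P ∈ V with g(P,P) = −1, π(X) = g(X,P), and Π(X,Y) = π(X)π(Y). Let Rg be a curvature-type tensor satisfying g(Rg(X,Y)U,V) = −g(Rg(X,Y)V,U), Rg(P,Y)Z = g(Y,Z)P − π(Z)Y, and π(Rg(X,Y)Z) = π(X)g(Y,Z) − π(Y)g(X,Z) for all X,Y,Z,U,V ∈ V, and let Ricg be a symmetric bilinear form with Ricg(P,X) = 3π(X). Suppose Ricg = (k(σ−p)/2)·g + k(σ+p)·Π for real numbers k ≠ 0, σ, p, and suppose there exists X ∈ V with g(X,P) = 0 and g(X,X) ≠ 0. With R0, R4, R5 and Ric0, Ric4, Ric5 defined as in the context, if either R0·Ric0 = 0, or R4·Ric4 = 0, or R5·Ric5 = Rg·Ricg, then σ + p = 0 (the equation of state represents a phantom barrier). -/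
/-- Pointwise algebraic form: if, in a 4-dimensional perfect fluid space-time with a
semi-symmetric metric `P`-connection satisfying Einstein's field equations without the
cosmological constant, either `R0·Ric0 = 0`, or `R4·Ric4 = 0`, or
`R5·Ric5 = Rg·Ricg` holds, then `σ + p = 0` (phantom barrier). -/
theorem stmt_18 {V : Type*} [AddCommGroup V] [Module ℝ V] [FiniteDimensional ℝ V]
    (hn : Module.finrank ℝ V = 4)
    (g : V →ₗ[ℝ] V →ₗ[ℝ] ℝ)
    (hgsymm : ∀ X Y : V, g X Y = g Y X)
    (P : V) (hPP : g P P = -1)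
    (π : V → ℝ) (hπ : ∀ X : V, π X = g X P)
    (Rg : V →ₗ[ℝ] V →ₗ[ℝ] V →ₗ[ℝ] V)
    (hskew : ∀ X Y U W : V, g (Rg X Y U) W = - g (Rg X Y W) U)
    (hRgP : ∀ Y Z : V, Rg P Y Z = g Y Z • P - π Z • Y)
    (hπRg : ∀ X Y Z : V, π (Rg X Y Z) = π X * g Y Z - π Y * g X Z)
    (Ricg : V →ₗ[ℝ] V →ₗ[ℝ] ℝ)
    (hRicsymm : ∀ X Y : V, Ricg X Y = Ricg Y X)
    (hRicP : ∀ X : V, Ricg P X = 3 * π X)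
    (k σ p : ℝ) (hk : k ≠ 0)
    (hRic : ∀ X Y : V, Ricg X Y =
      k * (σ - p)/2 * g X Y + k * (σ + p) * (π X * π Y))
    (hex : ∃ X : V, g X P = 0 ∧ g X X ≠ 0)
    (R0 R4 R5 : V → V → V → V)
    (hR0 : ∀ X Y Z : V, R0 X Y Z =
      Rg X Y Z + g X Z • Y - g Y Z • X - ((1:ℝ)/4 * π Z) • (π Y • X - π X • Y))
    (hR4 : ∀ X Y Z : V, R4 X Y Z =
      Rg X Y Z + g X Z • Y - g Y Z • X - π Z • (π Y • X - π X • Y))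
    (hR5 : ∀ X Y Z : V, R5 X Y Z =
      Rg X Y Z + g X Z • Y - g Y Z • X - ((1:ℝ)/2 * π Y) • (π Z • X - π X • Z))
    (Ric0 Ric4 Ric5 : V → V → ℝ)
    (hRic0 : ∀ X Y : V, Ric0 X Y =
      Ricg X Y - (3:ℝ)/4 * (4 * g X Y + π X * π Y))
    (hRic4 : ∀ X Y : V, Ric4 X Y =
      Ricg X Y - 3 * (g X Y + π X * π Y))
    (hRic5 : ∀ X Y : V, Ric5 X Y =
      Ricg X Y - (3:ℝ)/2 * (2 * g X Y + π X * π Y))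
    (hcond : (∀ U W X Y : V, curvDot Ric0 R0 U W X Y = 0) ∨
      (∀ U W X Y : V, curvDot Ric4 R4 U W X Y = 0) ∨
      (∀ U W X Y : V, curvDot Ric5 R5 U W X Y =
        curvDot (fun x y => Ricg x y) (fun x y z => Rg x y z) U W X Y)) :
    σ + p = 0 := by

  obtain ⟨X0, hX0P, hXX⟩ := hex
  have hπP : π P = -1 := by rw [hπ, hPP]
  have hπX : π X0 = 0 := by rw [hπ, hX0P]
  have hgPX : g P X0 = 0 := by rw [hgsymm, hX0P]
  have hπ0 : π (0 : V) = 0 := by rw [hπ]; simp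
  have hkey : k * (σ - p) / 2 = k * (σ + p) + 3 := by
    have h1 := hRicP P
    have h2 := hRic P P
    rw [hπP] at h1
    rw [hPP, hπP] at h2
    nlinarith [h1, h2]
  have hRXX : Ricg X0 X0 = k * (σ - p) / 2 * g X0 X0 := by
    rw [hRic, hπX]; ring
  suffices h : k * (σ + p) * g X0 X0 = 0 by
    rcases mul_eq_zero.mp h with h | h
    · rcases mul_eq_zero.mp h with h | h
      · exact absurd h hk
      · exact h
    · exact absurd h hXX
  rcases hcond with h0 | h4 | h5
  · have e1 : R0 P X0 X0 = 0 := by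
      rw [hR0, hRgP, hπX, hgPX, hπP]
      module
    have e2 : R0 P X0 P = (4⁻¹ : ℝ) • X0 := by
      rw [hR0, hRgP, hπX, hπP, hPP, hX0P]
      module
    have h := h0 X0 P P X0
    rw [curvDot, e1, e2, hRic0, hRic0] at h
    simp only [map_zero, LinearMap.zero_apply, map_smul, smul_eq_mul, hπX, hπ0,
      zero_mul, mul_zero] at h
    rw [hRXX, hkey] at h
    linarith [h]
  · have e1 : R4 P X0 X0 = 0 := by
      rw [hR4, hRgP, hπX, hgPX, hπP]
      module
    have e2 : R4 P X0 P = X0 := by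
      rw [hR4, hRgP, hπX, hπP, hPP, hX0P]
      module
    have h := h4 X0 P P X0
    rw [curvDot, e1, e2, hRic4, hRic4] at h
    simp only [map_zero, LinearMap.zero_apply, map_smul, smul_eq_mul, hπX, hπ0,
      zero_mul, mul_zero] at h
    rw [hRXX, hkey] at h
    linarith [h]
  · have e1 : R5 P X0 X0 = 0 := by
      rw [hR5, hRgP, hπX, hgPX, hπP]
      module
    have e2 : R5 P X0 P = 0 := by
      rw [hR5, hRgP, hπX, hπP, hPP, hX0P]
      module
    have h := h5 X0 P P X0
    rw [curvDot, curvDot, e1, e2, hRgP, hRgP, hRic5, hRic5] at h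
    simp only [map_zero, LinearMap.zero_apply, map_smul, map_sub,
      LinearMap.sub_apply, LinearMap.smul_apply, smul_eq_mul, hπX, hπ0, hπP,
      zero_mul, mul_zero, zero_smul, sub_zero] at h
    rw [hRicP, hπP, hX0P, hRXX, hkey] at h
    linarith [h]
end
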